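/- Let U ⊆ V be a set of vertices in a parity game that is closed with respect to player α, and let σ be a strategy for player α defined on all α-vertices of U with values in U. If the maximum priority on every cycle of the finite graph G[U, σ] — vertex set U, with edges (u,v) ∈ E such that u, v ∈ U and (u ∉ dom(σ) or σ(u) = v) — has α's parity, then every play in Plays(U, σ) remains in U forever and is won by player α; hence U is an α-dominion with winning strategy σ. -/

import Mathlib

/-!
A play from `U` consistent with `σ` never leaves `U`, so it is a walk in `G[U,σ]`, and from some
point on it only visits vertices of `inf(π)`. Between two such late visits to a vertex of `inf(π)`
of top priority, the play traces a cycle of `G[U,σ]` inside `inf(π)` through that vertex; its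
maximum priority is therefore the play's value, which has `α`'s parity by assumption.
-/

open scoped Classical

/-- A parity game on a finite vertex type `V`.  Player `false` is Even and
player `true` is Odd; `owner v` is the player controlling vertex `v`,
`edge` is the (left-total) move relation and `pr` assigns priorities. -/
structure ParityGame (V : Type) [Fintype V] where
  owner : V → Bool
  edge : V → V → Prop
  total : ∀ v, ∃ w, edge v w
  pr : V → ℕ

namespace ParityGame

variable {V : Type} [Fintype V] (G : ParityGame V)

/-- The player whose parity matches the priority `p` (`false` = Even, `true` = Odd). -/
def playerOf (p : ℕ) : Bool := decide (p % 2 = 1)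

/-- A play is an infinite sequence of vertices consistent with the edge relation. -/
def IsPlay (π : ℕ → V) : Prop := ∀ i, G.edge (π i) (π (i + 1))

/-- The set of vertices occurring infinitely often in `π`. -/
def infOcc (π : ℕ → V) : Set V := {v | ∀ n : ℕ, ∃ m, n ≤ m ∧ π m = v}

/-- The highest priority of a vertex in `S`. -/
noncomputable def maxPr (S : Set V) : ℕ := sSup (G.pr '' S)

/-- Player `α` wins the play `π` iff the highest priority occurring infinitely
often in `π` has `α`'s parity. -/
def Wins (α : Bool) (π : ℕ → V) : Prop := playerOf (G.maxPr (infOcc π)) = α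

/-- A (positional, partial) strategy for player `α`. -/
def IsStrategy (α : Bool) (σ : V → Option V) : Prop :=
  ∀ v w, σ v = some w → G.owner v = α ∧ G.edge v w

/-- A play is consistent with the strategy `σ`. -/
def Consistent (σ : V → Option V) (π : ℕ → V) : Prop :=
  ∀ i w, σ (π i) = some w → π (i + 1) = w

/-- All plays starting in `U` that are consistent with `σ`. -/
def PlaysFrom (U : Set V) (σ : V → Option V) : Set (ℕ → V) :=
  {π | G.IsPlay π ∧ π 0 ∈ U ∧ Consistent σ π}

/-- `U` is closed with respect to player `α`: every `α`-vertex of `U` has a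
successor in `U` and every opponent vertex of `U` has all successors in `U`. -/
def ClosedFor (α : Bool) (U : Set V) : Prop :=
  (∀ v ∈ U, G.owner v = α → ∃ w ∈ U, G.edge v w) ∧
  (∀ v ∈ U, G.owner v ≠ α → ∀ w, G.edge v w → w ∈ U)

/-- `D` is an `α`-dominion with (winning) strategy `σ`: `D` is closed for `α`,
`σ` is a strategy of `α` defined on all `α`-vertices of `D` with values in `D`,
and `α` wins every consistent play from `D`. -/
def IsDominionWith (α : Bool) (D : Set V) (σ : V → Option V) : Prop :=
  G.ClosedFor α D ∧ G.IsStrategy α σ ∧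
  (∀ v ∈ D, G.owner v = α → ∃ w ∈ D, σ v = some w) ∧
  ∀ π ∈ G.PlaysFrom D σ, G.Wins α π

/-- `D` is an `α`-dominion. -/
def IsDominion (α : Bool) (D : Set V) : Prop := ∃ σ, G.IsDominionWith α D σ

/-- The value of a play: the highest priority occurring infinitely often. -/
noncomputable def playValue (π : ℕ → V) : ℕ := G.maxPr (infOcc π)

/-- `D` is a `p`-dominion with winning strategy `σ`: a dominion such that `p` is
the maximum, over all consistent plays from `D`, of the highest priority seen
infinitely often. -/
def IsPDominionWith (α : Bool) (p : ℕ) (D : Set V) (σ : V → Option V) : Prop :=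
  G.IsDominionWith α D σ ∧ IsGreatest (G.playValue '' G.PlaysFrom D σ) p

/-- `D` is a `p`-dominion for player `α`. -/
def IsPDominion (α : Bool) (p : ℕ) (D : Set V) : Prop := ∃ σ, G.IsPDominionWith α p D σ

/-- The edges of the subgame `G[U,σ]` induced by `U` and the strategy `σ`. -/
def subEdge (U : Set V) (σ : V → Option V) (u v : V) : Prop :=
  u ∈ U ∧ v ∈ U ∧ G.edge u v ∧ (σ u = none ∨ σ u = some v)

/-- `G[U,σ]` is strongly connected. -/
def StronglyConnected (U : Set V) (σ : V → Option V) : Prop :=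
  ∀ u ∈ U, ∀ v ∈ U, Relation.ReflTransGen (G.subEdge U σ) u v

/-- A cycle of `G[U,σ]`: from `v` through the list `l` back to `v`. -/
def IsCycle (U : Set V) (σ : V → Option V) (v : V) (l : List V) : Prop :=
  List.Chain (G.subEdge U σ) v (l ++ [v])

/-- Player `α` wins all cycles of `G[U,σ]`: the maximum priority on every cycle
has `α`'s parity. -/
def WinsAllCycles (α : Bool) (U : Set V) (σ : V → Option V) : Prop :=
  ∀ v l, G.IsCycle U σ v l → playerOf (G.maxPr {x | x ∈ v :: l}) = α

/-- `(U, σ)` is a tangle: `U` is nonempty, `σ` is a strategy for the player `α`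
of the parity of the highest priority of `U`, defined exactly on the
`α`-vertices of `U` with values in `U`, the subgame `G[U,σ]` is strongly
connected, and player `α` wins all cycles of `G[U,σ]`. -/
def IsTangle (U : Set V) (σ : V → Option V) : Prop :=
  U.Nonempty ∧
  (∀ v w, σ v = some w → v ∈ U ∧ w ∈ U ∧ G.owner v = playerOf (G.maxPr U) ∧ G.edge v w) ∧
  (∀ v ∈ U, G.owner v = playerOf (G.maxPr U) → (σ v).isSome) ∧
  G.StronglyConnected U σ ∧
  G.WinsAllCycles (playerOf (G.maxPr U)) U σ

/-- The escapes `E_T(T)` of a tangle with vertex set `U`: the successors outside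
`U` of the opponent's vertices in `U`. -/
def escapes (U : Set V) : Set V :=
  {v | v ∉ U ∧ ∃ u ∈ U, G.owner u ≠ playerOf (G.maxPr U) ∧ G.edge u v}

/-- The restriction of a strategy to a set `U`. -/
noncomputable def restrict (σ : V → Option V) (U : Set V) : V → Option V :=
  fun v => if v ∈ U then σ v else none

/-- The attractor of `A` for player `α`: the least fixpoint of
`Z := A ∪ {v ∈ V_α | E(v) ∩ Z ≠ ∅} ∪ {v ∈ V_ᾱ | E(v) ⊆ Z}`. -/
inductive Attr (α : Bool) (A : Set V) : V → Prop
  | base : ∀ v, v ∈ A → Attr α A v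
  | step : ∀ v w, G.owner v = α → G.edge v w → Attr α A w → Attr α A v
  | forced : ∀ v, G.owner v ≠ α → (∀ w, G.edge v w → Attr α A w) → Attr α A v

/-- The attractor of `A` for player `α`, as a set. -/
def attrSet (α : Bool) (A : Set V) : Set V := {v | G.Attr α A v}

/-- The tangle attractor of `A` for player `α` with tangle set `TT`: the least
fixpoint additionally attracting all vertices of `α`-tangles of `TT` whose
escapes all lie in the attracting set. -/
inductive TAttr (α : Bool) (TT : Set (Set V × (V → Option V))) (A : Set V) : V → Prop
  | base : ∀ v, v ∈ A → TAttr α TT A v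
  | step : ∀ v w, G.owner v = α → G.edge v w → TAttr α TT A w → TAttr α TT A v
  | forced : ∀ v, G.owner v ≠ α → (∀ w, G.edge v w → TAttr α TT A w) → TAttr α TT A v
  | tangle : ∀ (U : Set V) (τ : V → Option V) (v : V), (U, τ) ∈ TT →
      G.IsTangle U τ → playerOf (G.maxPr U) = α →
      (∀ w ∈ G.escapes U, TAttr α TT A w) → v ∈ U → TAttr α TT A v

/-- The tangle attractor of `A` for player `α`, as a set. -/
def tattrSet (α : Bool) (TT : Set (Set V × (V → Option V))) (A : Set V) : Set V :=
  {v | G.TAttr α TT A v}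

end ParityGame

namespace ParityGame

variable {V : Type} [Fintype V]

theorem _root_.List.isChain_map_range' {α : Type*} {r : α → α → Prop} {f : ℕ → α}
    (h : ∀ i, r (f i) (f (i + 1))) (s n : ℕ) : ((List.range' s n).map f).IsChain r :=
  (List.isChain_map f).2 <| (List.isChain_range' s n 1).imp fun i _ hi => by subst hi; exact h i

theorem eventually_mem_infOcc (π : ℕ → V) : ∀ᶠ n in Filter.atTop, π n ∈ infOcc π := by
  have hfinite : ∀ v ∉ infOcc π, ∀ᶠ n in Filter.atTop, π n ≠ v := fun v hv =>
    Filter.not_frequently.1 (mt Filter.frequently_atTop.1 hv)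
  filter_upwards [Filter.eventually_all.2 fun v => Filter.eventually_imp_distrib_left.2 (hfinite v)]
    with n hn using of_not_not fun hnot => hn _ hnot rfl

section

variable (G : ParityGame V)

theorem pr_le_maxPr {S : Set V} {v : V} (hv : v ∈ S) : G.pr v ≤ G.maxPr S :=
  le_csSup (Set.toFinite _).bddAbove ⟨v, hv, rfl⟩

theorem exists_pr_eq_maxPr {S : Set V} (hS : S.Nonempty) : ∃ v ∈ S, G.pr v = G.maxPr S :=
  (hS.image G.pr).csSup_mem (Set.toFinite _)

theorem maxPr_mono {S T : Set V} (hS : S.Nonempty) (hST : S ⊆ T) : G.maxPr S ≤ G.maxPr T :=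
  csSup_le (hS.image G.pr) <| Set.forall_mem_image.2 fun _ hv => G.pr_le_maxPr (hST hv)

theorem mem_of_mem_playsFrom {α : Bool} {U : Set V} {σ : V → Option V}
    (hopp : ∀ v ∈ U, G.owner v ≠ α → ∀ w, G.edge v w → w ∈ U)
    (hdom : ∀ v ∈ U, G.owner v = α → ∃ w ∈ U, σ v = some w)
    {π : ℕ → V} (hπ : π ∈ G.PlaysFrom U σ) (i : ℕ) : π i ∈ U := by
  obtain ⟨hplay, h0, hcons⟩ := hπ
  induction i with
  | zero => exact h0
  | succ i ih =>
    by_cases hown : G.owner (π i) = α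
    · obtain ⟨w, hwU, hw⟩ := hdom _ ih hown
      exact hcons i w hw ▸ hwU
    · exact hopp _ ih hown _ (hplay i)

theorem subEdge_of_mem_playsFrom {U : Set V} {σ : V → Option V} {π : ℕ → V}
    (hπ : π ∈ G.PlaysFrom U σ) (hU : ∀ i, π i ∈ U) (i : ℕ) :
    G.subEdge U σ (π i) (π (i + 1)) := by
  refine ⟨hU i, hU (i + 1), hπ.1 i, ?_⟩
  cases h : σ (π i) with
  | none => exact Or.inl rfl
  | some w => exact Or.inr (congrArg some (hπ.2.2 i w h)).symm

theorem isCycle_of_eq {U : Set V} {σ : V → Option V} {π : ℕ → V}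
    (hπ : ∀ i, G.subEdge U σ (π i) (π (i + 1))) {m d : ℕ} (hrep : π (m + 1 + d) = π m) :
    G.IsCycle U σ (π m) ((List.range' (m + 1) d).map π) := by
  have hlist : π m :: ((List.range' (m + 1) d).map π ++ [π m]) =
      (List.range' m (d + 2)).map π := by
    rw [List.range'_succ, List.range'_concat]
    simp [hrep]
  show List.IsChain _ (π m :: _)
  exact hlist ▸ List.isChain_map_range' hπ m (d + 2)

theorem wins_of_winsAllCycles {α : Bool} {U : Set V} {σ : V → Option V}
    (hcyc : G.WinsAllCycles α U σ) {π : ℕ → V} (hπ : ∀ i, G.subEdge U σ (π i) (π (i + 1))) :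
    G.Wins α π := by
  obtain ⟨N, hN⟩ := Filter.eventually_atTop.1 (eventually_mem_infOcc π)
  obtain ⟨v, hv, hpv⟩ := G.exists_pr_eq_maxPr ⟨π N, hN N le_rfl⟩
  obtain ⟨m, hNm, rfl⟩ := hv N
  obtain ⟨m', hmm', hm'⟩ := hv (m + 1)
  obtain ⟨d, rfl⟩ := Nat.exists_eq_add_of_le hmm'
  have hcycle := isCycle_of_eq G hπ hm'
  have hsub : {x | x ∈ π m :: (List.range' (m + 1) d).map π} ⊆ infOcc π := by
    intro x hx
    rcases List.mem_cons.1 hx with rfl | hx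
    · exact hv
    · obtain ⟨i, hi, rfl⟩ := List.mem_map.1 hx
      exact hN i (by rw [List.mem_range'_1] at hi; omega)
  have heq : G.maxPr {x | x ∈ π m :: (List.range' (m + 1) d).map π} = G.maxPr (infOcc π) :=
    le_antisymm (G.maxPr_mono ⟨π m, List.mem_cons_self⟩ hsub)
      (hpv ▸ G.pr_le_maxPr List.mem_cons_self)
  rw [Wins, ← heq]
  exact hcyc _ _ hcycle

end

/-- if `U` is closed for `α`, `σ` is an `α`-strategy defined on
all `α`-vertices of `U` with values in `U`, and every cycle of `G[U,σ]` is won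
by `α`, then every consistent play from `U` stays in `U` and is won by `α`;
hence `U` is an `α`-dominion with winning strategy `σ`. -/
theorem closed_winning_cycles_dominion (G : ParityGame V) (α : Bool) (U : Set V)
    (σ : V → Option V) (hclosed : G.ClosedFor α U) (hσ : G.IsStrategy α σ)
    (hdom : ∀ v ∈ U, G.owner v = α → ∃ w ∈ U, σ v = some w)
    (hcyc : G.WinsAllCycles α U σ) :
    (∀ π ∈ G.PlaysFrom U σ, (∀ i, π i ∈ U) ∧ G.Wins α π) ∧
      G.IsDominionWith α U σ := by
  have hplays : ∀ π ∈ G.PlaysFrom U σ, (∀ i, π i ∈ U) ∧ G.Wins α π := fun π hπ =>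
    have hU := G.mem_of_mem_playsFrom hclosed.2 hdom hπ
    ⟨hU, G.wins_of_winsAllCycles hcyc (G.subEdge_of_mem_playsFrom hπ hU)⟩
  exact ⟨hplays, hclosed, hσ, hdom, fun π hπ => (hplays π hπ).2⟩

end ParityGame
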